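/- Let Ā be a real m×m matrix, ρ > 0 and τ_d > 0 scalars, P₀h and P₁d real symmetric m×m matrices, G₁ a real symmetric m×m matrix, and J́ a real m×m matrix. Suppose P₁d is positive definite and the 2m×2m block matrix [[e^{−2ρτ_d}·P₀h + G₁, J́ᵀ·exp(Āᵀτ_d)·P₁d], [(J́ᵀ·exp(Āᵀτ_d)·P₁d)ᵀ, P₁d]] is positive definite. Then for every ξ ∈ ℝ^m with ξᵀ·G₁·ξ ≤ 0, one has (J́·ξ)ᵀ · (e^{2ρτ_d}·exp(Āᵀτ_d)·P₁d·exp(Āτ_d)) · (J́·ξ) ≤ ξᵀ·P₀h·ξ. -/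

import Mathlib

open Matrix NormedSpace

/-!
Write `E = exp(τ_d Ā)` and `B = J́ᵀ Eᵀ P₁d`. By the Schur complement, positive definiteness of the
block matrix makes `e^{-2ρτ_d} P₀h + G₁ - B P₁d⁻¹ Bᵀ = e^{-2ρτ_d} P₀h + G₁ - J́ᵀ (Eᵀ P₁d E) J́`
positive semidefinite. Evaluating this quadratic form at `ξ` and dropping `ξᵀ G₁ ξ ≤ 0`
(S-procedure) gives `(J́ξ)ᵀ Eᵀ P₁d E (J́ξ) ≤ e^{-2ρτ_d} ξᵀ P₀h ξ`; multiply by `e^{2ρτ_d}`.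
-/

namespace Matrix

variable {n p : Type*} [Fintype n] [Fintype p]

theorem dotProduct_transpose_mul_mul_mulVec (M : Matrix p n ℝ) (P : Matrix p p ℝ) (x : n → ℝ) :
    x ⬝ᵥ (Mᵀ * P * M) *ᵥ x = (M *ᵥ x) ⬝ᵥ P *ᵥ (M *ᵥ x) := by
  rw [← mulVec_mulVec, ← mulVec_mulVec, dotProduct_mulVec, vecMul_transpose]

theorem PosDef.posSemidef_sub_mul_mul_transpose_of_fromBlocks [DecidableEq p] {A : Matrix n n ℝ}
    {C : Matrix n p ℝ} {D : Matrix p p ℝ} (hD : D.PosDef)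
    (h : (fromBlocks A (C * D) (C * D)ᵀ D).PosDef) : (A - C * D * Cᵀ).PosSemidef := by
  have : Invertible D := hD.isUnit.invertible
  have hDt : Dᵀ = D := hD.isHermitian
  have hcompl : C * D * D⁻¹ * (C * D)ᵀ = C * D * Cᵀ := by
    rw [transpose_mul, hDt, Matrix.mul_assoc, Matrix.mul_assoc, inv_mul_cancel_left_of_invertible,
      Matrix.mul_assoc]
  rw [← conjTranspose_eq_transpose_of_trivial] at h hcompl
  rw [← hcompl]
  exact (PosDef.fromBlocks₂₂ A (C * D) hD).mp h.posSemidef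

end Matrix

theorem stmt5_general (m : ℕ) (Abar : Matrix (Fin m) (Fin m) ℝ) (ρ τd : ℝ)
    (P0h P1d G₁ : Matrix (Fin m) (Fin m) ℝ) (Jacute : Matrix (Fin m) (Fin m) ℝ)
    (hP1dpos : P1d.PosDef)
    (hLMI : (Matrix.fromBlocks
        (Real.exp (-(2 * ρ * τd)) • P0h + G₁)
        (Jacuteᵀ * NormedSpace.exp (τd • Abarᵀ) * P1d)
        (Jacuteᵀ * NormedSpace.exp (τd • Abarᵀ) * P1d)ᵀ
        P1d).PosDef) :
    ∀ ξ : Fin m → ℝ, ξ ⬝ᵥ G₁ *ᵥ ξ ≤ 0 →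
      (Jacute *ᵥ ξ) ⬝ᵥ
          (Real.exp (2 * ρ * τd) • (NormedSpace.exp (τd • Abarᵀ) * P1d * NormedSpace.exp (τd • Abar))) *ᵥ
          (Jacute *ᵥ ξ) ≤
        ξ ⬝ᵥ P0h *ᵥ ξ := by
  intro ξ hξ
  set E := NormedSpace.exp (τd • Abar)
  have hEt : NormedSpace.exp (τd • Abarᵀ) = Eᵀ := by
    rw [← transpose_smul, exp_transpose]
  rw [hEt] at hLMI ⊢
  have hSchur :=
    (hP1dpos.posSemidef_sub_mul_mul_transpose_of_fromBlocks hLMI).dotProduct_mulVec_nonneg ξ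
  have hquad : (Jacute *ᵥ ξ) ⬝ᵥ (Eᵀ * P1d * E) *ᵥ (Jacute *ᵥ ξ)
      ≤ Real.exp (-(2 * ρ * τd)) * (ξ ⬝ᵥ P0h *ᵥ ξ) := by
    rw [← dotProduct_transpose_mul_mul_mulVec]
    simp only [star_trivial, sub_mulVec, add_mulVec, smul_mulVec, dotProduct_sub, dotProduct_add,
      dotProduct_smul, smul_eq_mul, transpose_mul, transpose_transpose, Matrix.mul_assoc] at hSchur ⊢
    linarith
  rw [smul_mulVec, dotProduct_smul, smul_eq_mul, ← le_div_iff₀' (Real.exp_pos _), div_eq_mul_inv,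
    ← Real.exp_neg, mul_comm]
  exact hquad

/-- Schur complement / S-procedure step for the first LMI of Corollary 4.1:
positive definiteness of the block matrix
`[[e^{−2ρτ_d}·P₀h + G₁, J́ᵀ·exp(Āᵀτ_d)·P₁d], [(J́ᵀ·exp(Āᵀτ_d)·P₁d)ᵀ, P₁d]]`
implies that for every `ξ` with `ξᵀG₁ξ ≤ 0`,
`(J́ξ)ᵀ · (e^{2ρτ_d}·exp(Āᵀτ_d)·P₁d·exp(Āτ_d)) · (J́ξ) ≤ ξᵀ·P₀h·ξ`. -/
theorem stmt5 (m : ℕ) (Abar : Matrix (Fin m) (Fin m) ℝ) (ρ τd : ℝ) (hρ : 0 < ρ) (hτd : 0 < τd)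
    (P0h P1d G₁ : Matrix (Fin m) (Fin m) ℝ) (Jacute : Matrix (Fin m) (Fin m) ℝ)
    (hP0h : P0h.IsSymm) (hP1d : P1d.IsSymm) (hG₁ : G₁.IsSymm)
    (hP1dpos : P1d.PosDef)
    (hLMI : (Matrix.fromBlocks
        (Real.exp (-(2 * ρ * τd)) • P0h + G₁)
        (Jacuteᵀ * NormedSpace.exp (τd • Abarᵀ) * P1d)
        (Jacuteᵀ * NormedSpace.exp (τd • Abarᵀ) * P1d)ᵀ
        P1d).PosDef) :
    ∀ ξ : Fin m → ℝ, ξ ⬝ᵥ G₁ *ᵥ ξ ≤ 0 →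
      (Jacute *ᵥ ξ) ⬝ᵥ
          (Real.exp (2 * ρ * τd) • (NormedSpace.exp (τd • Abarᵀ) * P1d * NormedSpace.exp (τd • Abar))) *ᵥ
          (Jacute *ᵥ ξ) ≤
        ξ ⬝ᵥ P0h *ᵥ ξ :=
  stmt5_general m Abar ρ τd P0h P1d G₁ Jacute hP1dpos hLMI
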